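/- There exists a finite simple connected graph G with at least two vertices such that μ(G) > max over all pairs of adjacent vertices v_i ~ v_j of G of 2 + √(3·(m_i² + m_j²) − 2·m_i·m_j − 4·(d_i + d_j) + 4). (This disproves conjectured edge-maximum bound 43 of Brankov, Hansen and Stevanović.) -/

import Mathlib

noncomputable section

open Finset

/-- The degree of a vertex, as a real number. -/
def degR {V : Type*} [Fintype V] (G : SimpleGraph V) (v : V) : ℝ :=
  letI := Classical.decRel G.Adj
  (G.degree v : ℝ)

/-- The average degree of the neighbours of a vertex, as a real number:
`m_v = (∑_{u ~ v} d_u) / d_v`. -/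
def avgDegR {V : Type*} [Fintype V] (G : SimpleGraph V) (v : V) : ℝ :=
  letI := Classical.decRel G.Adj
  (∑ u ∈ G.neighborFinset v, (G.degree u : ℝ)) / (G.degree v : ℝ)

/-- The largest eigenvalue of the Laplacian matrix `L = D - A` of a finite graph. -/
def lapSpecRad {V : Type*} [Fintype V] [DecidableEq V] [Nonempty V]
    (G : SimpleGraph V) : ℝ :=
  letI := Classical.decRel G.Adj
  ⨆ i, (SimpleGraph.posSemidef_lapMatrix ℝ G).isHermitian.eigenvalues i

/-!
Testing the Laplacian quadratic form on the vector that is `d_v` at a vertex `v`, `-1` on its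
neighbours and `0` elsewhere gives the classical bound `μ(G) ≥ d_v + 1`: each of the `d_v` edges at
`v` contributes `(d_v + 1)²`, while the vector has squared norm `d_v (d_v + 1)`.

On the spider with nine legs of length two this gives `μ ≥ 10`. The vertices have
`(d, m) = (9, 2)` (centre), `(2, 5)` (middle) and `(1, 2)` (leaf), and the radicand is largest on a
pendant edge, where it equals `3 (25 + 4) - 20 - 12 + 4 = 59`; since `2 + √59 < 10`, the bound fails.
-/

open Matrix

theorem Matrix.IsHermitian.dotProduct_mulVec_le_iSup_eigenvalues {n : Type*} [Fintype n]
    [DecidableEq n] [Nonempty n] {A : Matrix n n ℝ} (hA : A.IsHermitian) (x : n → ℝ) :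
    x ⬝ᵥ A *ᵥ x ≤ (⨆ i, hA.eigenvalues i) * (x ⬝ᵥ x) := by
  set c := ⨆ i, hA.eigenvalues i
  have hpsd : (algebraMap ℝ (Matrix n n ℝ) c - A).PosSemidef := by
    refine posSemidef_iff_isHermitian_and_spectrum_nonneg.mpr
      ⟨(IsSelfAdjoint.algebraMap _ (.all c)).sub hA, ?_⟩
    rw [← spectrum.singleton_sub_eq, hA.spectrum_real_eq_range_eigenvalues]
    rintro _ ⟨_, rfl, _, ⟨i, rfl⟩, rfl⟩
    exact sub_nonneg.mpr (le_ciSup (Set.finite_range hA.eigenvalues).bddAbove i)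
  have := hpsd.dotProduct_mulVec_nonneg x
  simp only [star_trivial, Algebra.algebraMap_eq_smul_one, sub_mulVec, smul_mulVec, one_mulVec,
    dotProduct_sub, dotProduct_smul, smul_eq_mul] at this
  linarith

namespace SimpleGraph

variable {V : Type*} [Fintype V] (G : SimpleGraph V) [DecidableRel G.Adj]

theorem degR_eq (v : V) : degR G v = G.degree v := by
  unfold degR; congr!

theorem avgDegR_eq (v : V) :
    avgDegR G v = (∑ u ∈ G.neighborFinset v, (G.degree u : ℝ)) / G.degree v := by
  unfold avgDegR; congr!

theorem lapSpecRad_eq [DecidableEq V] [Nonempty V] :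
    lapSpecRad G = ⨆ i, (G.posSemidef_lapMatrix ℝ).isHermitian.eigenvalues i := by
  unfold lapSpecRad; congr!

theorem sum_ite_adj_eq_degree_mul (v : V) (c : ℝ) :
    (∑ u, if G.Adj v u then c else 0) = G.degree v * c := by
  rw [G.degree_eq_sum_if_adj, Finset.sum_mul]
  exact Finset.sum_congr rfl fun u _ => by split_ifs <;> simp

variable [DecidableEq V]

def starVector (v : V) : V → ℝ :=
  fun u => if u = v then (G.degree v : ℝ) else if G.Adj v u then -1 else 0

theorem starVector_dotProduct_self (v : V) :
    G.starVector v ⬝ᵥ G.starVector v = G.degree v * (G.degree v + 1) := by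
  calc G.starVector v ⬝ᵥ G.starVector v
      = ∑ u, ((if u = v then (G.degree v : ℝ) ^ 2 else 0) + if G.Adj v u then 1 else 0) := by
        refine Finset.sum_congr rfl fun u _ => ?_
        by_cases hu : u = v
        · simp [hu, starVector, sq]
        · by_cases h : G.Adj v u <;> simp [hu, h, starVector]
    _ = G.degree v * (G.degree v + 1) := by
        rw [Finset.sum_add_distrib, Finset.sum_ite_eq', sum_ite_adj_eq_degree_mul]; simp; ring

theorem degree_mul_sq_le_lapMatrix_starVector (v : V) :
    (G.degree v : ℝ) * (G.degree v + 1) ^ 2 ≤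
      G.starVector v ⬝ᵥ G.lapMatrix ℝ *ᵥ G.starVector v := by
  set d : ℝ := (G.degree v : ℝ)
  set x := G.starVector v
  have hedge : ∀ i j, (if i = v ∧ G.Adj v j then (d + 1) ^ 2 else 0) +
      (if j = v ∧ G.Adj v i then (d + 1) ^ 2 else 0) ≤
      if G.Adj i j then (x i - x j) ^ 2 else 0 := by
    intro i j
    by_cases hi : i = v <;> by_cases hj : j = v
    · simp [hi, hj]
    · subst hi
      by_cases hij : G.Adj i j <;> simp [hij, hj, x, d, starVector]
    · subst hj
      by_cases hij : G.Adj i j <;> simp [hij, hi, x, d, starVector, G.adj_comm j i]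
      exact le_of_eq (by ring)
    · simp only [hi, hj, false_and, if_false, add_zero]
      split_ifs <;> positivity
  rw [← toLinearMap₂'_apply', lapMatrix_toLinearMap₂', le_div_iff₀ two_pos]
  calc d * (d + 1) ^ 2 * 2
      = ∑ i, ∑ j, ((if i = v ∧ G.Adj v j then (d + 1) ^ 2 else 0) +
          (if j = v ∧ G.Adj v i then (d + 1) ^ 2 else 0)) := by
        simp [Finset.sum_add_distrib, ite_and, sum_ite_adj_eq_degree_mul]; ring
    _ ≤ _ := Finset.sum_le_sum fun i _ => Finset.sum_le_sum fun j _ => hedge i j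

theorem degree_add_one_le_lapSpecRad [Nonempty V] {v : V} (hv : 0 < G.degree v) :
    (G.degree v + 1 : ℝ) ≤ lapSpecRad G := by
  have hμ := (G.posSemidef_lapMatrix ℝ).isHermitian.dotProduct_mulVec_le_iSup_eigenvalues
    (G.starVector v)
  rw [← lapSpecRad_eq, starVector_dotProduct_self] at hμ
  have hd : (0 : ℝ) < G.degree v := by exact_mod_cast hv
  refine le_of_mul_le_mul_right ?_ (by positivity : (0 : ℝ) < G.degree v * (G.degree v + 1))
  calc ((G.degree v : ℝ) + 1) * (G.degree v * (G.degree v + 1))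
      = G.degree v * (G.degree v + 1) ^ 2 := by ring
    _ ≤ _ := G.degree_mul_sq_le_lapMatrix_starVector v
    _ ≤ _ := hμ

end SimpleGraph

/-- Nine paths of length two glued at their end vertex `0`: the middle vertices are `1, …, 9`
and the leaf hanging from `i` is `i + 9`. -/
def spider : SimpleGraph (Fin 19) :=
  SimpleGraph.fromRel fun i j => (i = 0 ∧ j ≠ 0 ∧ (j : ℕ) ≤ 9) ∨ ((j : ℕ) = i + 9 ∧ i ≠ 0)

instance : DecidableRel spider.Adj := fun i j =>
  decidable_of_iff' _ (SimpleGraph.fromRel_adj _ i j)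

lemma spider_connected : spider.Connected := by
  have hdist : ∀ w : Fin 19, w = 0 ∨ spider.Adj 0 w ∨ ∃ m, spider.Adj 0 m ∧ spider.Adj m w := by
    decide
  refine (SimpleGraph.connected_iff_exists_forall_reachable _).mpr ⟨0, fun w => ?_⟩
  rcases hdist w with rfl | hw | ⟨m, h0m, hmw⟩
  · rfl
  · exact hw.reachable
  · exact h0m.reachable.trans hmw.reachable

lemma spider_degree_zero : spider.degree 0 = 9 := by decide

lemma spider_degree_sum_mem (v : Fin 19) :
    (spider.degree v, ∑ u ∈ spider.neighborFinset v, spider.degree u) ∈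
      ({(9, 18), (2, 10), (1, 2)} : Finset (ℕ × ℕ)) := by
  revert v; decide

lemma spider_not_adj_of_degree_eq_two {i j : Fin 19} (hi : spider.degree i = 2)
    (hj : spider.degree j = 2) : ¬spider.Adj i j := by
  revert i j; decide

lemma spider_radicand_le {i j : Fin 19} (hij : spider.Adj i j) :
    3 * (avgDegR spider i ^ 2 + avgDegR spider j ^ 2) - 2 * avgDegR spider i * avgDegR spider j
      - 4 * (degR spider i + degR spider j) + 4 ≤ 59 := by
  have hi := spider_degree_sum_mem i
  have hj := spider_degree_sum_mem j
  simp only [Finset.mem_insert, Finset.mem_singleton, Prod.ext_iff] at hi hj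
  simp only [SimpleGraph.degR_eq, SimpleGraph.avgDegR_eq, ← Nat.cast_sum]
  rcases hi with ⟨hi₁, hi₂⟩ | ⟨hi₁, hi₂⟩ | ⟨hi₁, hi₂⟩ <;>
    rcases hj with ⟨hj₁, hj₂⟩ | ⟨hj₁, hj₂⟩ | ⟨hj₁, hj₂⟩ <;>
    rw [hi₁, hi₂, hj₁, hj₂] <;> norm_num
  exact spider_not_adj_of_degree_eq_two hi₁ hj₁ hij

/-- There exists a finite simple connected graph `G` with at least two vertices whose
Laplacian spectral radius exceeds the conjectured edge-maximum bound. -/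
theorem exists_counterexample_bound43 :
    ∃ (V : Type) (_ : Fintype V) (_ : DecidableEq V) (_ : Nonempty V)
      (G : SimpleGraph V), G.Connected ∧ 2 ≤ Fintype.card V ∧
      ∀ i j : V, G.Adj i j →
        (fun di mi dj mj => 2 + Real.sqrt (3 * (mi ^ 2 + mj ^ 2) - 2 * mi * mj - 4 * (di + dj) + 4))
          (degR G i) (avgDegR G i) (degR G j) (avgDegR G j) < lapSpecRad G := by
  refine ⟨Fin 19, inferInstance, inferInstance, inferInstance, spider, spider_connected,
    by simp, fun i j hij => ?_⟩
  have hμ : (10 : ℝ) ≤ lapSpecRad spider := by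
    have := spider.degree_add_one_le_lapSpecRad (v := 0) (by simp [spider_degree_zero])
    norm_num [spider_degree_zero] at this
    exact this
  have hsqrt : √59 < 8 := by rw [Real.sqrt_lt' (by norm_num)]; norm_num
  beta_reduce
  calc _ ≤ 2 + √59 := by gcongr; exact spider_radicand_le hij
    _ < 10 := by linarith
    _ ≤ lapSpecRad spider := hμ
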